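/- Consider a generations network with generation size K ≥ 2 in which positions {2,…,K} are partitioned into N ≥ 1 silos S_1,…,S_N, with observation sets Ψ_k = S_n for every position k ∈ S_n and Ψ_1 = {2,…,K}, and let r_i be the signal counts from the equilibrium weight recursion. Then agents in the first position eventually aggregate lim_{t→∞} r_{(t−1)K+1}/t = Σ_{n=1}^N (2|S_n|−1)/|S_n| signals per generation, and for each silo n and each position k ∈ S_n, lim_{t→∞} r_{(t−1)K+k}/t = (2|S_n|−1)/|S_n|. -/

import Mathlib

open Matrix Finset Filter

/-- The equilibrium weight vectors of the sequential social-learning model. -/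
noncomputable def eqW (Net : ℕ → Finset ℕ) (i : ℕ) : ℕ → ℝ :=
  Nat.strongRecOn i (fun n prev =>
    let nb := (Net n).filter (fun j => j < n)
    if nb.Nonempty then
      let What : Matrix {j // j ∈ nb} (Fin (n - 1)) ℝ :=
        Matrix.of (fun j m => prev j.1 (Finset.mem_filter.mp j.2).2 (m.1 + 1))
      let beta : {j // j ∈ nb} → ℝ :=
        Matrix.vecMul (fun j => ∑ m, What j m) ((What * What.transpose)⁻¹)
      fun m => (if m = n then (1 : ℝ) else 0) +
        ∑ j : {j // j ∈ nb}, beta j * prev j.1 (Finset.mem_filter.mp j.2).2 m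
    else fun m => if m = n then (1 : ℝ) else 0)

/-- The number of signals aggregated by agent `i`: `r_i = Σ_j W_i(j)`. -/
noncomputable def rcount (Net : ℕ → Finset ℕ) (i : ℕ) : ℝ :=
  ∑ j ∈ Finset.range (i + 1), eqW Net i j

/-- The generations network with generation size `K` and observation sets `Ψ`:
`N(i) = ∅` for `1 ≤ i ≤ K`, and `N((t−1)K+k) = {(t−2)K+ψ : ψ ∈ Ψ_k}` for `t ≥ 2`,
`1 ≤ k ≤ K`. -/
def genNet (K : ℕ) (Ψ : ℕ → Finset ℕ) : ℕ → Finset ℕ := fun i =>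
  if i ≤ K then ∅
  else (Ψ ((i - 1) % K + 1)).image (fun ψ => ((i - 1) / K - 1) * K + ψ)

/-!
Write `W_i` for `eqW`. Weight vectors are unitriangular (`W_i i = 1` and `W_i m = 0` for `m > i`),
so the weight vectors of the neighbours of an agent are linearly independent, their Gram matrix is
invertible, and `β_i` is the unique solution of the normal equations
`∑ⱼ β_j ⟪W_j, W_j'⟫ = ⟪𝟙, W_j'⟫`.

By induction on the generation, the weight vectors of the members of a silo of size `s` in one
generation have Gram matrix `I + (ρ - 1) J` and coordinate sums `ρ`, and are supported on the
positions of that silo, so vectors from different silos are orthogonal. The normal equations of the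
next generation are then solved by the coefficient `ρ / (1 + s (ρ - 1))` on every member of the
silo observed, which gives the recursion `ρ' = 1 + s ρ² / (1 + s (ρ - 1))` for silo members, while
an executive adds up `ρ' - 1` over all silos. The increments of this recursion tend to
`(2 s - 1) / s`, hence so does `ρ_t / t` by Cesàro.
-/

theorem sum_fin_sub_one_eq_sum_Ico {M : Type*} [AddCommMonoid M] (f : ℕ → M) (i : ℕ) :
    ∑ m : Fin (i - 1), f (m + 1) = ∑ m ∈ Ico 1 i, f m := by
  rw [Fin.sum_univ_eq_sum_range (fun m => f (m + 1)), Finset.sum_Ico_eq_sum_range]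
  simp only [add_comm 1]

theorem sum_Ico_one_eq_sum_range {M : Type*} [AddCommMonoid M] {f : ℕ → M} (h : f 0 = 0)
    (n : ℕ) : ∑ m ∈ Ico 1 n, f m = ∑ m ∈ range n, f m := by
  rcases Nat.eq_zero_or_pos n with rfl | hn
  · simp
  · rw [Finset.sum_range_eq_add_Ico f hn, h, zero_add]

section eqW

def nbrs (Net : ℕ → Finset ℕ) (i : ℕ) : Finset ℕ := (Net i).filter (· < i)

-- `nbrWeights` and `eqCoeff` are the matrix `Ŵ` and the vector `β_i` in the definition of `eqW`.
noncomputable def nbrWeights (Net : ℕ → Finset ℕ) (i : ℕ) :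
    Matrix (nbrs Net i) (Fin (i - 1)) ℝ :=
  Matrix.of fun j m => eqW Net j (m + 1)

noncomputable def eqCoeff (Net : ℕ → Finset ℕ) (i : ℕ) : nbrs Net i → ℝ :=
  vecMul (fun j => ∑ m, nbrWeights Net i j m) (nbrWeights Net i * (nbrWeights Net i)ᵀ)⁻¹

theorem eqW_apply (Net : ℕ → Finset ℕ) (i m : ℕ) :
    eqW Net i m = (if m = i then 1 else 0) + ∑ j, eqCoeff Net i j * eqW Net j m := by
  rw [eqW, Nat.strongRecOn_eq]
  by_cases hne : (nbrs Net i).Nonempty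
  · exact congrFun (if_pos hne) m
  · have : IsEmpty (nbrs Net i) := by simpa [Finset.not_nonempty_iff_eq_empty] using hne
    rw [Fintype.sum_empty, add_zero]
    exact congrFun (if_neg hne) m

theorem eqW_apply_of_lt (Net : ℕ → Finset ℕ) {i m : ℕ} (h : i < m) : eqW Net i m = 0 := by
  induction i using Nat.strong_induction_on with
  | _ i ih =>
    rw [eqW_apply, if_neg h.ne', zero_add]
    refine Finset.sum_eq_zero fun j _ => ?_
    have hj : (j : ℕ) < i := (Finset.mem_filter.1 j.2).2
    rw [ih j hj (hj.trans h), mul_zero]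

theorem eqW_self (Net : ℕ → Finset ℕ) (i : ℕ) : eqW Net i i = 1 := by
  rw [eqW_apply, if_pos rfl, add_eq_left]
  exact Finset.sum_eq_zero fun j _ => by
    rw [eqW_apply_of_lt Net (Finset.mem_filter.1 j.2).2, mul_zero]

theorem rcount_eq_sum_range (Net : ℕ → Finset ℕ) {i R : ℕ} (h : i < R) :
    rcount Net i = ∑ m ∈ range R, eqW Net i m :=
  Finset.sum_subset (range_subset_range.2 h) fun m _ hm =>
    eqW_apply_of_lt Net (by simpa using hm)

theorem eq_zero_of_sum_mul_eqW_eq_zero (Net : ℕ → Finset ℕ) (F : Finset ℕ) (x : F → ℝ)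
    (h : ∀ m ∈ F, ∑ j, x j * eqW Net j m = 0) : x = 0 := by
  by_contra hx
  obtain ⟨j₀, hj₀, hmax⟩ :=
    (Finset.univ.filter (x · ≠ 0)).exists_max_image (fun j : F => (j : ℕ))
      (by simpa [Finset.filter_nonempty_iff, funext_iff] using hx)
  refine (Finset.mem_filter.1 hj₀).2 ?_
  have hsum := h j₀ j₀.2
  rwa [Finset.sum_eq_single j₀ (fun j _ hj => ?_) (by simp), eqW_self, mul_one] at hsum
  by_cases hxj : x j = 0
  · rw [hxj, zero_mul]
  · have hlt : (j : ℕ) < j₀ :=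
      lt_of_le_of_ne (hmax j (by simpa using hxj)) fun h => hj (Subtype.ext h)
    rw [eqW_apply_of_lt Net hlt, mul_zero]

theorem vecMul_nbrWeights_apply (Net : ℕ → Finset ℕ) (i : ℕ) (x : nbrs Net i → ℝ)
    (m : Fin (i - 1)) : (x ᵥ* nbrWeights Net i) m = ∑ j, x j * eqW Net j (m + 1) := rfl

theorem vecMul_gram_nbrWeights_apply (Net : ℕ → Finset ℕ) (i : ℕ) (x : nbrs Net i → ℝ)
    (j' : nbrs Net i) :
    (x ᵥ* (nbrWeights Net i * (nbrWeights Net i)ᵀ)) j' =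
      ∑ m ∈ Ico 1 i, (∑ j, x j * eqW Net j m) * eqW Net j' m := by
  rw [← vecMul_vecMul, vecMul_transpose, ← sum_fin_sub_one_eq_sum_Ico]
  simp only [mulVec, dotProduct, vecMul_nbrWeights_apply, mul_comm]
  rfl

theorem isUnit_det_gram_nbrWeights {Net : ℕ → Finset ℕ} {i : ℕ} (h0 : 0 ∉ Net i) :
    IsUnit (nbrWeights Net i * (nbrWeights Net i)ᵀ).det := by
  classical
  rw [isUnit_iff_ne_zero, Ne, ← exists_vecMul_eq_zero_iff]
  rintro ⟨v, hv, hvG⟩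
  have hvM : v ᵥ* nbrWeights Net i = 0 := by
    rw [← dotProduct_self_eq_zero, ← dotProduct_mulVec, ← vecMul_transpose, vecMul_vecMul,
      hvG, dotProduct_zero]
  refine hv (eq_zero_of_sum_mul_eqW_eq_zero Net _ v fun m hm => ?_)
  obtain ⟨hmNet, hmi⟩ := Finset.mem_filter.1 hm
  have hm1 : 1 ≤ m := Nat.one_le_iff_ne_zero.2 fun h => h0 (h ▸ hmNet)
  have := congrFun hvM ⟨m - 1, by omega⟩
  rwa [vecMul_nbrWeights_apply, Nat.sub_add_cancel hm1] at this

theorem eqW_eq_of_normal_eq {Net : ℕ → Finset ℕ} {i : ℕ} (h0 : 0 ∉ Net i) (β : ℕ → ℝ)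
    (hβ : ∀ j' ∈ nbrs Net i,
      ∑ m ∈ Ico 1 i, (∑ j ∈ nbrs Net i, β j * eqW Net j m) * eqW Net j' m =
        ∑ m ∈ Ico 1 i, eqW Net j' m)
    (m : ℕ) : eqW Net i m = (if m = i then 1 else 0) + ∑ j ∈ nbrs Net i, β j * eqW Net j m := by
  set G := nbrWeights Net i * (nbrWeights Net i)ᵀ
  have hnormal : (fun j : nbrs Net i => β j) ᵥ* G = fun j => ∑ m, nbrWeights Net i j m := by
    funext j'
    calc _ = ∑ m ∈ Ico 1 i, (∑ j ∈ nbrs Net i, β j * eqW Net j m) * eqW Net j' m := by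
          rw [vecMul_gram_nbrWeights_apply]
          exact Finset.sum_congr rfl fun m _ => by
            rw [Finset.sum_coe_sort (nbrs Net i) fun j => β j * eqW Net j m]
      _ = ∑ m ∈ Ico 1 i, eqW Net j' m := hβ j' j'.2
      _ = _ := (sum_fin_sub_one_eq_sum_Ico _ i).symm
  have hcoeff : eqCoeff Net i = fun j : nbrs Net i => β j := by
    rw [eqCoeff, ← hnormal, vecMul_vecMul, mul_nonsing_inv _ (isUnit_det_gram_nbrWeights h0),
      vecMul_one]
  rw [eqW_apply, hcoeff, Finset.sum_coe_sort (nbrs Net i) fun j => β j * eqW Net j m]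

end eqW

section siloSignals

-- A member of an `s`-agent silo in generation `t + 1` aggregates `siloSignals s t` signals and
-- puts the weight `siloCoeff s t` on each member of its silo in generation `t`.
noncomputable def siloSignals (s : ℝ) : ℕ → ℝ
  | 0 => 1
  | t + 1 => 1 + s * siloSignals s t ^ 2 / (1 + s * (siloSignals s t - 1))

noncomputable def siloCoeff (s : ℝ) (t : ℕ) : ℝ :=
  siloSignals s t / (1 + s * (siloSignals s t - 1))

variable {s : ℝ}

theorem siloSignals_zero (s : ℝ) : siloSignals s 0 = 1 := rfl

theorem siloSignals_succ (s : ℝ) (t : ℕ) :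
    siloSignals s (t + 1) = 1 + s * siloSignals s t * siloCoeff s t := by
  rw [siloSignals, siloCoeff]
  ring

theorem one_le_siloSignals (hs : 0 ≤ s) (t : ℕ) : 1 ≤ siloSignals s t := by
  induction t with
  | zero => rfl
  | succ t ih =>
    rw [siloSignals, le_add_iff_nonneg_right]
    have : 0 ≤ s * (siloSignals s t - 1) := mul_nonneg hs (by linarith)
    positivity

theorem siloSignals_den_pos (hs : 0 ≤ s) (t : ℕ) : 0 < 1 + s * (siloSignals s t - 1) := by
  have := mul_nonneg hs (sub_nonneg.2 (one_le_siloSignals hs t))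
  linarith

theorem siloCoeff_mul_den (hs : 0 ≤ s) (t : ℕ) :
    siloCoeff s t * (1 + s * (siloSignals s t - 1)) = siloSignals s t :=
  div_mul_cancel₀ _ (siloSignals_den_pos hs t).ne'

theorem siloCoeff_sq_mul (hs : 0 ≤ s) (t : ℕ) :
    siloCoeff s t ^ 2 * (s * (1 + s * (siloSignals s t - 1))) = siloSignals s (t + 1) - 1 := by
  have hD := (siloSignals_den_pos hs t).ne'
  rw [siloSignals, siloCoeff]
  field_simp
  ring

theorem siloSignals_succ_sub (hs : 0 < s) (t : ℕ) :
    siloSignals s (t + 1) - siloSignals s t =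
      (2 * s - 1) / s + (s - 1) ^ 2 / (s * (1 + s * (siloSignals s t - 1))) := by
  have hD := (siloSignals_den_pos hs.le t).ne'
  rw [siloSignals]
  field_simp
  ring

theorem add_le_siloSignals (hs : 1 ≤ s) (t : ℕ) : 1 + t ≤ siloSignals s t := by
  have hs0 : 0 < s := by linarith
  induction t with
  | zero => simp [siloSignals_zero]
  | succ t ih =>
    have hinc := siloSignals_succ_sub hs0 t
    have h1 : 1 ≤ (2 * s - 1) / s := by rw [le_div_iff₀ hs0]; linarith
    have h2 : 0 ≤ (s - 1) ^ 2 / (s * (1 + s * (siloSignals s t - 1))) := by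
      have := siloSignals_den_pos hs0.le t
      positivity
    push_cast
    linarith

theorem tendsto_siloSignals_succ_sub (hs : 1 ≤ s) :
    Tendsto (fun t => siloSignals s (t + 1) - siloSignals s t) atTop
      (nhds ((2 * s - 1) / s)) := by
  have hs0 : 0 < s := by linarith
  simp_rw [siloSignals_succ_sub hs0]
  conv => enter [3, 1]; rw [← add_zero ((2 * s - 1) / s)]
  refine tendsto_const_nhds.add (Tendsto.div_atTop tendsto_const_nhds ?_)
  refine tendsto_atTop_mono (fun t => ?_) tendsto_natCast_atTop_atTop
  have hρ : (t : ℝ) ≤ siloSignals s t - 1 := by linarith [add_le_siloSignals hs t]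
  have hsρ : (t : ℝ) ≤ s * (siloSignals s t - 1) := by nlinarith
  nlinarith

theorem tendsto_siloSignals_div (hs : 1 ≤ s) :
    Tendsto (fun t : ℕ => siloSignals s t / t) atTop (nhds ((2 * s - 1) / s)) := by
  have hcesaro := (tendsto_siloSignals_succ_sub hs).cesaro
  simp_rw [Finset.sum_range_sub (siloSignals s), siloSignals_zero] at hcesaro
  have h := hcesaro.add (tendsto_one_div_atTop_nhds_zero_nat (𝕜 := ℝ))
  rw [add_zero] at h
  refine h.congr fun t => ?_
  ring

theorem tendsto_siloSignals_pred_div (hs : 1 ≤ s) :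
    Tendsto (fun t : ℕ => siloSignals s (t - 1) / t) atTop (nhds ((2 * s - 1) / s)) := by
  have hsucc : Tendsto (fun t : ℕ => siloSignals s t / (t + 1 : ℕ)) atTop
      (nhds ((2 * s - 1) / s)) := by
    have h := (tendsto_siloSignals_div hs).mul (tendsto_natCast_div_add_atTop (1 : ℝ))
    rw [mul_one] at h
    refine h.congr' ((eventually_ne_atTop 0).mono fun t ht => ?_)
    have : (t : ℝ) ≠ 0 := Nat.cast_ne_zero.2 ht
    push_cast
    field_simp
  refine (hsucc.comp (tendsto_sub_atTop_nat 1)).congr'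
    ((eventually_ne_atTop 0).mono fun t ht => ?_)
  simp only [Function.comp_apply, Nat.sub_add_cancel (Nat.one_le_iff_ne_zero.2 ht)]

end siloSignals

section genNet

variable {K : ℕ} {Ψ : ℕ → Finset ℕ}

theorem mul_add_sub_one_mod_add_one {k : ℕ} (hk : k ∈ Icc 1 K) (t : ℕ) :
    (t * K + k - 1) % K + 1 = k := by
  obtain ⟨hk1, hkK⟩ := Finset.mem_Icc.1 hk
  rw [show t * K + k - 1 = k - 1 + t * K by omega, Nat.add_mul_mod_self_right,
    Nat.mod_eq_of_lt (by omega), Nat.sub_add_cancel hk1]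

theorem mul_add_sub_one_div {k : ℕ} (hk : k ∈ Icc 1 K) (t : ℕ) : (t * K + k - 1) / K = t := by
  obtain ⟨hk1, hkK⟩ := Finset.mem_Icc.1 hk
  rw [show t * K + k - 1 = k - 1 + t * K by omega, Nat.add_mul_div_right _ _ (by omega),
    Nat.div_eq_of_lt (by omega), zero_add]

theorem eqW_genNet_of_le {i : ℕ} (h : i ≤ K) (m : ℕ) :
    eqW (genNet K Ψ) i m = if m = i then 1 else 0 := by
  have : IsEmpty (nbrs (genNet K Ψ) i) := by
    rw [nbrs, genNet, if_pos h, Finset.filter_empty]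
    infer_instance
  rw [eqW_apply, Fintype.sum_empty, add_zero]

theorem rcount_genNet_of_le {i : ℕ} (h : i ≤ K) : rcount (genNet K Ψ) i = 1 := by
  simp only [rcount, eqW_genNet_of_le h]
  rw [Finset.sum_ite_eq_of_mem' _ _ _ (Finset.self_mem_range_succ i)]

theorem genNet_succ_mul_add {p : ℕ} (hp : p ∈ Icc 1 K) (t : ℕ) :
    genNet K Ψ ((t + 1) * K + p) = (Ψ p).image (t * K + ·) := by
  have hp1 := (Finset.mem_Icc.1 hp).1
  rw [genNet, if_neg (by nlinarith), mul_add_sub_one_mod_add_one hp, mul_add_sub_one_div hp,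
    Nat.add_sub_cancel]

theorem nbrs_genNet_succ_mul_add {p : ℕ} (hp : p ∈ Icc 1 K) (hΨ : Ψ p ⊆ Icc 1 K) (t : ℕ) :
    nbrs (genNet K Ψ) ((t + 1) * K + p) = (Ψ p).image (t * K + ·) := by
  rw [nbrs, genNet_succ_mul_add hp, Finset.filter_true_of_mem]
  intro j hj
  obtain ⟨ψ, hψ, rfl⟩ := Finset.mem_image.1 hj
  have := (Finset.mem_Icc.1 (hΨ hψ)).2
  have := (Finset.mem_Icc.1 hp).1
  nlinarith

theorem zero_notMem_genNet_succ_mul_add {p : ℕ} (hp : p ∈ Icc 1 K) (hΨ : Ψ p ⊆ Icc 1 K)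
    (t : ℕ) : 0 ∉ genNet K Ψ ((t + 1) * K + p) := by
  rw [genNet_succ_mul_add hp]
  rintro hj
  obtain ⟨ψ, hψ, hψ0⟩ := Finset.mem_image.1 hj
  have := (Finset.mem_Icc.1 (hΨ hψ)).1
  omega

end genNet

section silos

noncomputable def siloWeight (K : ℕ) (Ψ : ℕ → Finset ℕ) (A : Finset ℕ) (t m : ℕ) : ℝ :=
  ∑ ψ ∈ A, eqW (genNet K Ψ) (t * K + ψ) m

-- `(m - 1) % K + 1` is the position of agent `m` in its generation.
structure SiloInvariant (K : ℕ) (Ψ : ℕ → Finset ℕ) (A : Finset ℕ) (t : ℕ) : Prop where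
  support : ∀ k ∈ A, ∀ m, eqW (genNet K Ψ) (t * K + k) m ≠ 0 → 0 < m ∧ (m - 1) % K + 1 ∈ A
  rcount_eq : ∀ k ∈ A, rcount (genNet K Ψ) (t * K + k) = siloSignals A.card t
  gram : ∀ k ∈ A, ∀ k' ∈ A, ∀ R, (t + 1) * K < R →
    ∑ m ∈ range R, eqW (genNet K Ψ) (t * K + k) m * eqW (genNet K Ψ) (t * K + k') m =
      (if k = k' then 1 else 0) + (siloSignals A.card t - 1)

variable {K : ℕ} {Ψ : ℕ → Finset ℕ} {A B : Finset ℕ} {t : ℕ}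

theorem siloWeight_eq_zero_of_lt (hA : A ⊆ Icc 1 K) {m : ℕ} (hm : (t + 1) * K < m) :
    siloWeight K Ψ A t m = 0 :=
  Finset.sum_eq_zero fun ψ hψ =>
    eqW_apply_of_lt _ (by have := (Finset.mem_Icc.1 (hA hψ)).2; nlinarith)

namespace SiloInvariant

theorem eqW_apply_zero (h : SiloInvariant K Ψ A t) {k : ℕ} (hk : k ∈ A) :
    eqW (genNet K Ψ) (t * K + k) 0 = 0 := by
  by_contra h0
  exact (h.support k hk 0 h0).1.false

theorem sum_siloWeight (h : SiloInvariant K Ψ A t) (hA : A ⊆ Icc 1 K) {R : ℕ}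
    (hR : (t + 1) * K < R) :
    ∑ m ∈ range R, siloWeight K Ψ A t m = A.card * siloSignals A.card t := by
  simp only [siloWeight]
  rw [Finset.sum_comm, ← nsmul_eq_mul, ← Finset.sum_const]
  refine Finset.sum_congr rfl fun k hk => ?_
  rw [← rcount_eq_sum_range, h.rcount_eq k hk]
  have := (Finset.mem_Icc.1 (hA hk)).2
  nlinarith

theorem sum_siloWeight_mul (h : SiloInvariant K Ψ A t) {k' : ℕ} (hk' : k' ∈ A) {R : ℕ}
    (hR : (t + 1) * K < R) :
    ∑ m ∈ range R, siloWeight K Ψ A t m * eqW (genNet K Ψ) (t * K + k') m =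
      1 + A.card * (siloSignals A.card t - 1) := by
  simp only [siloWeight, Finset.sum_mul]
  rw [Finset.sum_comm, Finset.sum_congr rfl fun k hk => h.gram k hk k' hk' R hR,
    Finset.sum_add_distrib, Finset.sum_ite_eq_of_mem' _ _ _ hk', Finset.sum_const, nsmul_eq_mul]

theorem sum_siloWeight_sq (h : SiloInvariant K Ψ A t) {R : ℕ} (hR : (t + 1) * K < R) :
    ∑ m ∈ range R, siloWeight K Ψ A t m * siloWeight K Ψ A t m =
      A.card * (1 + A.card * (siloSignals A.card t - 1)) := by
  conv_lhs => enter [2, m, 2]; rw [siloWeight]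
  simp only [Finset.mul_sum]
  rw [Finset.sum_comm, Finset.sum_congr rfl fun k' hk' => h.sum_siloWeight_mul hk' hR,
    Finset.sum_const, nsmul_eq_mul]

theorem siloWeight_mul_eqW_eq_zero (h : SiloInvariant K Ψ A t) (h' : SiloInvariant K Ψ B t)
    (hAB : Disjoint A B) {k : ℕ} (hk : k ∈ B) (m : ℕ) :
    siloWeight K Ψ A t m * eqW (genNet K Ψ) (t * K + k) m = 0 := by
  rw [siloWeight, Finset.sum_mul]
  refine Finset.sum_eq_zero fun ψ hψ => ?_
  by_contra hne
  have hA := (h.support ψ hψ m (left_ne_zero_of_mul hne)).2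
  have hB := (h'.support k hk m (right_ne_zero_of_mul hne)).2
  exact Finset.disjoint_left.1 hAB hA hB

end SiloInvariant

variable {ι : Type*} {S : ι → Finset ℕ} {T : Finset ι}

theorem sum_siloCoeff_mul_siloWeight_mul_eqW (hdisj : (T : Set ι).PairwiseDisjoint S)
    (hinv : ∀ n ∈ T, SiloInvariant K Ψ (S n) t) {n' : ι} (hn' : n' ∈ T) {k' : ℕ}
    (hk' : k' ∈ S n') {R : ℕ} (hR : (t + 1) * K < R) :
    ∑ m ∈ range R, (∑ n ∈ T, siloCoeff (S n).card t * siloWeight K Ψ (S n) t m) *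
      eqW (genNet K Ψ) (t * K + k') m = siloSignals (S n').card t := by
  simp only [Finset.sum_mul, mul_assoc]
  rw [Finset.sum_comm, Finset.sum_eq_single_of_mem n' hn' fun n hn hne => ?_]
  · rw [← Finset.mul_sum, (hinv n' hn').sum_siloWeight_mul hk' hR,
      siloCoeff_mul_den (Nat.cast_nonneg _)]
  · refine Finset.sum_eq_zero fun m _ => ?_
    rw [(hinv n hn).siloWeight_mul_eqW_eq_zero (hinv n' hn') (hdisj hn hn' hne) hk', mul_zero]

theorem eqW_genNet_succ_mul_add (hSK : ∀ n ∈ T, S n ⊆ Icc 1 K)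
    (hdisj : (T : Set ι).PairwiseDisjoint S) (hinv : ∀ n ∈ T, SiloInvariant K Ψ (S n) t)
    {p : ℕ} (hp : p ∈ Icc 1 K) (hΨp : Ψ p = T.biUnion S) (m : ℕ) :
    eqW (genNet K Ψ) ((t + 1) * K + p) m = (if m = (t + 1) * K + p then 1 else 0) +
      ∑ n ∈ T, siloCoeff (S n).card t * siloWeight K Ψ (S n) t m := by
  have hΨK : Ψ p ⊆ Icc 1 K := hΨp ▸ Finset.biUnion_subset.2 hSK
  have hnbrs := nbrs_genNet_succ_mul_add hp hΨK t
  rw [hΨp] at hnbrs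
  set β : ℕ → ℝ := fun j => ∑ n ∈ T, if j - t * K ∈ S n then siloCoeff (S n).card t else 0
  have hβ : ∀ n ∈ T, ∀ ψ ∈ S n, β (t * K + ψ) = siloCoeff (S n).card t := by
    intro n hn ψ hψ
    simp only [β, Nat.add_sub_cancel_left]
    rw [Finset.sum_eq_single_of_mem n hn fun n' hn' hne =>
      if_neg fun hψ' => hne (hdisj.elim_finset hn' hn ψ hψ' hψ), if_pos hψ]
  have hcomb : ∀ m, ∑ j ∈ nbrs (genNet K Ψ) ((t + 1) * K + p), β j * eqW (genNet K Ψ) j m =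
      ∑ n ∈ T, siloCoeff (S n).card t * siloWeight K Ψ (S n) t m := by
    intro m
    rw [hnbrs, Finset.sum_image fun _ _ _ _ h => Nat.add_left_cancel h,
      Finset.sum_biUnion hdisj]
    refine Finset.sum_congr rfl fun n hn => ?_
    rw [siloWeight, Finset.mul_sum]
    exact Finset.sum_congr rfl fun ψ hψ => by rw [hβ n hn ψ hψ]
  rw [eqW_eq_of_normal_eq (zero_notMem_genNet_succ_mul_add hp hΨK t) β ?_ m, hcomb]
  intro j' hj'
  rw [hnbrs] at hj'
  obtain ⟨k', hk', rfl⟩ := Finset.mem_image.1 hj'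
  obtain ⟨n', hn', hk'n'⟩ := Finset.mem_biUnion.1 hk'
  have hR : (t + 1) * K < (t + 1) * K + p := by have := (Finset.mem_Icc.1 hp).1; omega
  have hk'R : t * K + k' < (t + 1) * K + p := by
    have := (Finset.mem_Icc.1 (hSK n' hn' hk'n')).2; nlinarith
  have hz := (hinv n' hn').eqW_apply_zero hk'n'
  simp only [hcomb]
  rw [sum_Ico_one_eq_sum_range (by rw [hz, mul_zero]), sum_Ico_one_eq_sum_range hz,
    sum_siloCoeff_mul_siloWeight_mul_eqW hdisj hinv hn' hk'n' hR, ← rcount_eq_sum_range _ hk'R,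
    (hinv n' hn').rcount_eq k' hk'n']

theorem rcount_genNet_succ_mul_add (hSK : ∀ n ∈ T, S n ⊆ Icc 1 K)
    (hdisj : (T : Set ι).PairwiseDisjoint S) (hinv : ∀ n ∈ T, SiloInvariant K Ψ (S n) t)
    {p : ℕ} (hp : p ∈ Icc 1 K) (hΨp : Ψ p = T.biUnion S) :
    rcount (genNet K Ψ) ((t + 1) * K + p) =
      1 + ∑ n ∈ T, (siloSignals (S n).card (t + 1) - 1) := by
  have hR : (t + 1) * K < (t + 1) * K + p + 1 := by omega
  rw [rcount]
  simp only [eqW_genNet_succ_mul_add hSK hdisj hinv hp hΨp]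
  rw [Finset.sum_add_distrib, Finset.sum_ite_eq_of_mem' _ _ _ (Finset.self_mem_range_succ _),
    Finset.sum_comm]
  congr 1
  refine Finset.sum_congr rfl fun n hn => ?_
  rw [← Finset.mul_sum, (hinv n hn).sum_siloWeight (hSK n hn) hR, siloSignals_succ]
  ring

theorem SiloInvariant.zero (hA : A ⊆ Icc 1 K) : SiloInvariant K Ψ A 0 where
  support k hk m hm := by
    rw [zero_mul, zero_add, eqW_genNet_of_le (Finset.mem_Icc.1 (hA hk)).2] at hm
    obtain rfl : m = k := by by_contra h; exact hm (if_neg h)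
    have hmod := mul_add_sub_one_mod_add_one (hA hk) 0
    rw [zero_mul, zero_add] at hmod
    exact ⟨(Finset.mem_Icc.1 (hA hk)).1, by rw [hmod]; exact hk⟩
  rcount_eq k hk := by
    rw [zero_mul, zero_add, rcount_genNet_of_le (Finset.mem_Icc.1 (hA hk)).2, siloSignals_zero]
  gram k hk k' hk' R hR := by
    have hkR : k < R := by have := (Finset.mem_Icc.1 (hA hk)).2; omega
    simp only [zero_mul, zero_add, eqW_genNet_of_le (Finset.mem_Icc.1 (hA hk)).2,
      eqW_genNet_of_le (Finset.mem_Icc.1 (hA hk')).2, ite_mul, one_mul, zero_mul,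
      Finset.sum_ite_eq', Finset.mem_range, hkR, if_true, siloSignals_zero, sub_self, add_zero]

theorem SiloInvariant.eqW_succ_mul_add (h : SiloInvariant K Ψ A t) (hA : A ⊆ Icc 1 K)
    (hΨ : ∀ k ∈ A, Ψ k = A) {k : ℕ} (hk : k ∈ A) (m : ℕ) :
    eqW (genNet K Ψ) ((t + 1) * K + k) m =
      (if m = (t + 1) * K + k then 1 else 0) + siloCoeff A.card t * siloWeight K Ψ A t m := by
  simpa using eqW_genNet_succ_mul_add (S := fun _ : Unit => A) (T := {()}) (by simpa)
    (by simp) (by simpa) (hA hk) (by simpa using hΨ k hk) m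

theorem SiloInvariant.succ (h : SiloInvariant K Ψ A t) (hA : A ⊆ Icc 1 K)
    (hΨ : ∀ k ∈ A, Ψ k = A) : SiloInvariant K Ψ A (t + 1) := by
  refine ⟨fun k hk m hm => ?_, fun k hk => ?_, fun k hk k' hk' R hR => ?_⟩
  · rw [h.eqW_succ_mul_add hA hΨ hk] at hm
    by_cases hmk : m = (t + 1) * K + k
    · subst hmk
      exact ⟨by have := (Finset.mem_Icc.1 (hA hk)).1; omega,
        (mul_add_sub_one_mod_add_one (hA hk) _).symm ▸ hk⟩
    · rw [if_neg hmk, zero_add] at hm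
      obtain ⟨ψ, hψ, hne⟩ := Finset.exists_ne_zero_of_sum_ne_zero (right_ne_zero_of_mul hm)
      exact h.support ψ hψ m hne
  · simpa using rcount_genNet_succ_mul_add (S := fun _ : Unit => A) (T := {()}) (by simpa)
      (by simp) (by simpa) (hA hk) (by simpa using hΨ k hk)
  · have hV : ∀ k ∈ A, siloWeight K Ψ A t ((t + 1) * K + k) = 0 := fun k hk =>
      siloWeight_eq_zero_of_lt hA (by have := (Finset.mem_Icc.1 (hA hk)).1; omega)
    have hlt : ∀ k ∈ A, (t + 1) * K + k < R := fun k hk => by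
      have := (Finset.mem_Icc.1 (hA hk)).2; nlinarith
    set b := siloCoeff A.card t
    set V := siloWeight K Ψ A t
    calc ∑ m ∈ range R,
          eqW (genNet K Ψ) ((t + 1) * K + k) m * eqW (genNet K Ψ) ((t + 1) * K + k') m
        = ∑ m ∈ range R,
            ((if m = (t + 1) * K + k then (if m = (t + 1) * K + k' then 1 else 0) else 0) +
              (if m = (t + 1) * K + k then b * V m else 0) +
              (if m = (t + 1) * K + k' then b * V m else 0) + b ^ 2 * (V m * V m)) :=
          Finset.sum_congr rfl fun m _ => by
            rw [h.eqW_succ_mul_add hA hΨ hk, h.eqW_succ_mul_add hA hΨ hk']; split_ifs <;> ring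
      _ = (if k = k' then 1 else 0) + b * V ((t + 1) * K + k) + b * V ((t + 1) * K + k') +
            b ^ 2 * ∑ m ∈ range R, V m * V m := by
          simp only [Finset.sum_add_distrib, Finset.sum_ite_eq', Finset.mem_range, hlt k hk,
            hlt k' hk', if_true, ← Finset.mul_sum, Nat.add_left_cancel_iff]
      _ = _ := by
          rw [hV k hk, hV k' hk', h.sum_siloWeight_sq (by nlinarith),
            siloCoeff_sq_mul (Nat.cast_nonneg _)]
          ring

theorem siloInvariant (hA : A ⊆ Icc 1 K) (hΨ : ∀ k ∈ A, Ψ k = A) (t : ℕ) :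
    SiloInvariant K Ψ A t := by
  induction t with
  | zero => exact SiloInvariant.zero hA
  | succ t ih => exact ih.succ hA hΨ

open Function in
theorem rcount_genNet_mul_add_one [Fintype ι] (hK : 1 ≤ K) (hSK : ∀ n, S n ⊆ Icc 1 K)
    (hdisj : Pairwise (Disjoint on S)) (hΨ1 : Ψ 1 = Finset.univ.biUnion S)
    (hΨ : ∀ n, ∀ k ∈ S n, Ψ k = S n) (t : ℕ) :
    rcount (genNet K Ψ) (t * K + 1) = 1 + ∑ n, (siloSignals (S n).card t - 1) := by
  cases t with
  | zero => simp [rcount_genNet_of_le hK, siloSignals_zero]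
  | succ t =>
    exact rcount_genNet_succ_mul_add (fun n _ => hSK n) (hdisj.set_pairwise _)
      (fun n _ => siloInvariant (hSK n) (hΨ n) t) (Finset.mem_Icc.2 ⟨le_rfl, hK⟩) hΨ1

end silos

theorem information_silos_general (K N : ℕ) (hK : 2 ≤ K)
    (S : Fin N → Finset ℕ)
    (hSnonempty : ∀ n, (S n).Nonempty)
    (hSdisjoint : ∀ n n', n ≠ n' → Disjoint (S n) (S n'))
    (hScover : (Finset.univ : Finset (Fin N)).biUnion S = Finset.Icc 2 K)
    (Ψ : ℕ → Finset ℕ)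
    (hΨ1 : Ψ 1 = Finset.Icc 2 K)
    (hΨsilo : ∀ n : Fin N, ∀ k ∈ S n, Ψ k = S n) :
    Tendsto (fun t : ℕ => rcount (genNet K Ψ) ((t - 1) * K + 1) / (t : ℝ)) atTop
      (nhds (∑ n : Fin N, (2 * ((S n).card : ℝ) - 1) / ((S n).card : ℝ))) ∧
    (∀ n : Fin N, ∀ k ∈ S n,
      Tendsto (fun t : ℕ => rcount (genNet K Ψ) ((t - 1) * K + k) / (t : ℝ)) atTop
        (nhds ((2 * ((S n).card : ℝ) - 1) / ((S n).card : ℝ)))) := by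
  have hSK : ∀ n, S n ⊆ Icc 1 K := fun n =>
    (Finset.subset_biUnion_of_mem S (Finset.mem_univ n)).trans
      (hScover ▸ Finset.Icc_subset_Icc_left one_le_two)
  have hs : ∀ n, (1 : ℝ) ≤ (S n).card := fun n => Nat.one_le_cast.2 (hSnonempty n).card_pos
  refine ⟨?_, fun n k hk => ?_⟩
  · have hlim :=
      (tendsto_finsetSum Finset.univ fun n _ => tendsto_siloSignals_pred_div (hs n)).add
        (tendsto_const_div_atTop_nhds_zero_nat (1 - N : ℝ))
    rw [add_zero] at hlim
    refine hlim.congr fun t => ?_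
    rw [rcount_genNet_mul_add_one (by omega) hSK hSdisjoint (hΨ1.trans hScover.symm) hΨsilo,
      Finset.sum_sub_distrib, Finset.sum_const, Finset.card_univ, Fintype.card_fin, nsmul_eq_mul,
      mul_one, ← Finset.sum_div, ← add_div]
    ring
  · exact (tendsto_siloSignals_pred_div (hs n)).congr fun t => by
      rw [(siloInvariant (hSK n) (hΨsilo n) (t - 1)).rcount_eq k hk]

/-- In a generations network with `K ≥ 2` agents per generation
where positions `{2,…,K}` are partitioned into `N ≥ 1` silos `S_1,…,S_N`, each
position `k ∈ S_n` observes exactly its own silo (`Ψ_k = S_n`) and position `1`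
(the executives) observes all silos (`Ψ_1 = {2,…,K}`). Then executives eventually
aggregate `Σ_n (2|S_n|−1)/|S_n|` signals per generation, and each position in silo
`n` eventually aggregates `(2|S_n|−1)/|S_n|` signals per generation. -/
theorem information_silos (K N : ℕ) (hK : 2 ≤ K) (hN : 1 ≤ N)
    (S : Fin N → Finset ℕ)
    (hSnonempty : ∀ n, (S n).Nonempty)
    (hSdisjoint : ∀ n n', n ≠ n' → Disjoint (S n) (S n'))
    (hScover : (Finset.univ : Finset (Fin N)).biUnion S = Finset.Icc 2 K)
    (Ψ : ℕ → Finset ℕ)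
    (hΨ1 : Ψ 1 = Finset.Icc 2 K)
    (hΨsilo : ∀ n : Fin N, ∀ k ∈ S n, Ψ k = S n) :
    Tendsto (fun t : ℕ => rcount (genNet K Ψ) ((t - 1) * K + 1) / (t : ℝ)) atTop
      (nhds (∑ n : Fin N, (2 * ((S n).card : ℝ) - 1) / ((S n).card : ℝ))) ∧
    (∀ n : Fin N, ∀ k ∈ S n,
      Tendsto (fun t : ℕ => rcount (genNet K Ψ) ((t - 1) * K + k) / (t : ℝ)) atTop
        (nhds ((2 * ((S n).card : ℝ) - 1) / ((S n).card : ℝ)))) :=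
  information_silos_general K N hK S hSnonempty hSdisjoint hScover Ψ hΨ1 hΨsilo
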